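/- For any nonnegative integers o ≤ m, the inequality (o/m)^o (1 - o/m)^{m-o} / (Γ(o + 1/2) · Γ(m - o + 1/2)) ≤ 1 / (Γ(m + 1/2) · Γ(1/2)) holds, where 0^0 is interpreted as 1. -/
import Mathlib

open Real

lemma T1_le (x : ℝ) (hx0 : 0 ≤ x) (hx1 : x ≤ 1) (k : ℕ) : 1 - (k:ℝ) * x ≤ (1 - x)^k := by
  have h := one_add_mul_le_pow (a := -x) (by linarith) k
  have : 1 + (k:ℝ) * (-x) = 1 - (k:ℝ)*x := by ring
  rw [this] at h
  simpa [sub_eq_add_neg] using h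

lemma pow_le_T2 (x : ℝ) (hx0 : 0 ≤ x) (hx1 : x ≤ 1) (k : ℕ) :
    (1 - x)^k ≤ 1 - (k:ℝ)*x + ((k:ℝ)*((k:ℝ)-1)/2)*x^2 := by
  induction k with
  | zero => norm_num
  | succ k ih =>
    have hb := T1_le x hx0 hx1 k
    have h1x : (0:ℝ) ≤ 1 - x := by linarith
    have hk : (0:ℝ) ≤ k := Nat.cast_nonneg k
    have step : (1-x)^(k+1) ≤ (1 - (k:ℝ)*x + ((k:ℝ)*((k:ℝ)-1)/2)*x^2) * (1-x) := by
      rw [pow_succ]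
      exact mul_le_mul_of_nonneg_right ih h1x
    have hq : 0 ≤ (k:ℝ)*((k:ℝ)-1) := by
      rcases Nat.eq_zero_or_pos k with h|h
      · simp [h]
      · have : (1:ℝ) ≤ k := by exact_mod_cast h
        nlinarith
    push_cast
    nlinarith [mul_nonneg (mul_nonneg hq (sq_nonneg x)) hx0, mul_nonneg hx0 (sq_nonneg x)]

lemma T3_le_pow (x : ℝ) (hx0 : 0 ≤ x) (hx1 : x ≤ 1) (k : ℕ) :
    1 - (k:ℝ)*x + ((k:ℝ)*((k:ℝ)-1)/2)*x^2 - ((k:ℝ)*((k:ℝ)-1)*((k:ℝ)-2)/6)*x^3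
      ≤ (1 - x)^k := by
  induction k with
  | zero => norm_num
  | succ k ih =>
    have h1x : (0:ℝ) ≤ 1 - x := by linarith
    have hk : (0:ℝ) ≤ k := Nat.cast_nonneg k
    have hc : 0 ≤ (k:ℝ)*((k:ℝ)-1)*((k:ℝ)-2) := by
      rcases k with _|_|k
      · norm_num
      · norm_num
      · have hk0 : (0:ℝ) ≤ k := Nat.cast_nonneg k
        push_cast
        nlinarith [mul_nonneg (mul_nonneg hk0 hk0) hk0, mul_nonneg hk0 hk0]
    have key : (1 - (k:ℝ)*x + ((k:ℝ)*((k:ℝ)-1)/2)*x^2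
        - ((k:ℝ)*((k:ℝ)-1)*((k:ℝ)-2)/6)*x^3) * (1-x) ≤ (1-x)^(k+1) := by
      rcases le_or_gt (1 - (k:ℝ)*x + ((k:ℝ)*((k:ℝ)-1)/2)*x^2
          - ((k:ℝ)*((k:ℝ)-1)*((k:ℝ)-2)/6)*x^3) 0 with h|h
      · exact (mul_nonpos_of_nonpos_of_nonneg h h1x).trans (pow_nonneg h1x _)
      · rw [pow_succ]
        exact mul_le_mul_of_nonneg_right ih h1x
    push_cast
    nlinarith [key, mul_nonneg hc (pow_nonneg hx0 4)]

lemma cast_pow_pos (k : ℕ) : (0:ℝ) < (k:ℝ)^k := by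
  rcases Nat.eq_zero_or_pos k with h|h
  · simp [h]
  · have : (0:ℝ) < k := by exact_mod_cast h
    positivity

lemma poly_step (k : ℕ) :
    ((k:ℝ)+1)^(2*k+2) * (2*(k:ℝ)+3) ≤ ((k:ℝ)+2)^(k+2) * (k:ℝ)^k * (2*(k:ℝ)+1) := by
  have hk : (0:ℝ) ≤ k := Nat.cast_nonneg k
  set K : ℝ := (k:ℝ) with hK
  have hK1 : (0:ℝ) < (K+1)^2 := by positivity
  have hy0 : (0:ℝ) ≤ 1/(K+1)^2 := by positivity
  have hy1 : 1/(K+1)^2 ≤ 1 := by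
    rw [div_le_one hK1]; nlinarith
  have h3 := T3_le_pow (1/(K+1)^2) hy0 hy1 k
  have h4 : (1 - K*(1/(K+1)^2) + (K*(K-1)/2)*(1/(K+1)^2)^2
        - (K*(K-1)*(K-2)/6)*(1/(K+1)^2)^3) * ((K+1)^2)^k
      ≤ K^k*(K+2)^k := by
    have h := mul_le_mul_of_nonneg_right h3 (by positivity : (0:ℝ) ≤ ((K+1)^2)^k)
    have hprod : ((1 - 1/(K+1)^2)*((K+1)^2))^k = K^k*(K+2)^k := by
      rw [← mul_pow]
      congr 1
      field_simp
      ring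
    rw [← mul_pow, hprod] at h
    exact h
  have hnum : (0:ℝ) ≤ K^6+6*K^5+20*K^4+29*K^3+18*K^2+16*K+6 := by
    nlinarith [pow_nonneg hk 6, pow_nonneg hk 5, pow_nonneg hk 4, pow_nonneg hk 3,
      pow_nonneg hk 2]
  have h5 : (K+1)^2*(2*K+3) ≤ (K+2)^2*(2*K+1) *
      (1 - K*(1/(K+1)^2) + (K*(K-1)/2)*(1/(K+1)^2)^2
        - (K*(K-1)*(K-2)/6)*(1/(K+1)^2)^3) := by
    have expand : (K+2)^2*(2*K+1) *
        (1 - K*(1/(K+1)^2) + (K*(K-1)/2)*(1/(K+1)^2)^2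
          - (K*(K-1)*(K-2)/6)*(1/(K+1)^2)^3) - (K+1)^2*(2*K+3)
        = (K^6+6*K^5+20*K^4+29*K^3+18*K^2+16*K+6)/(6*(K+1)^6) := by
      field_simp
      ring
    have hpos : (0:ℝ) ≤ (K^6+6*K^5+20*K^4+29*K^3+18*K^2+16*K+6)/(6*(K+1)^6) :=
      div_nonneg hnum (by positivity)
    linarith [expand, hpos]
  have hnn : (0:ℝ) ≤ ((K+1)^2)^k := by positivity
  calc (K+1)^(2*k+2) * (2*K+3) = ((K+1)^2)^k * ((K+1)^2*(2*K+3)) := by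
        rw [pow_add, pow_mul]; ring
    _ ≤ ((K+1)^2)^k * ((K+2)^2*(2*K+1) *
        (1 - K*(1/(K+1)^2) + (K*(K-1)/2)*(1/(K+1)^2)^2
          - (K*(K-1)*(K-2)/6)*(1/(K+1)^2)^3)) :=
        mul_le_mul_of_nonneg_left h5 hnn
    _ = (K+2)^2*(2*K+1) *
        ((1 - K*(1/(K+1)^2) + (K*(K-1)/2)*(1/(K+1)^2)^2
          - (K*(K-1)*(K-2)/6)*(1/(K+1)^2)^3) * ((K+1)^2)^k) := by ring
    _ ≤ (K+2)^2*(2*K+1) * (K^k*(K+2)^k) := by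
        apply mul_le_mul_of_nonneg_left h4; nlinarith
    _ = (K+2)^(k+2) * K^k * (2*K+1) := by rw [pow_add]; ring

noncomputable def Phi (k : ℕ) : ℝ := ((k:ℝ)+1)^(k+1) / ((k:ℝ)^k * ((k:ℝ)+1/2))

lemma Phi_denom_pos (k : ℕ) : (0:ℝ) < (k:ℝ)^k * ((k:ℝ)+1/2) := by
  have h1 := cast_pow_pos k
  have h2 : (0:ℝ) ≤ k := Nat.cast_nonneg k
  nlinarith

lemma Phi_mono : Monotone Phi := by
  apply monotone_nat_of_le_succ
  intro k
  unfold Phi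
  rw [div_le_div_iff₀ (Phi_denom_pos k) (Phi_denom_pos (k+1))]
  have hp := poly_step k
  have e1 : ((k:ℝ)+1)^(2*k+2) = ((k:ℝ)+1)^(k+1)*((k:ℝ)+1)^(k+1) := by
    rw [← pow_add]; congr 1; ring
  rw [e1] at hp
  push_cast
  rw [show ((k:ℝ)+1+1) = ((k:ℝ)+2) from by ring]
  nlinarith [hp]

lemma phi_le (a M : ℕ) (h : a ≤ M) :
    ((a:ℝ)+1)^(a+1) * ((M:ℝ)^M * ((M:ℝ)+1/2)) ≤
      ((M:ℝ)+1)^(M+1) * ((a:ℝ)^a * ((a:ℝ)+1/2)) := by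
  have := Phi_mono h
  unfold Phi at this
  rwa [div_le_div_iff₀ (Phi_denom_pos a) (Phi_denom_pos M)] at this

lemma key_ineq (o : ℕ) : ∀ m, o ≤ m →
    (o:ℝ)^o * (((m-o:ℕ)):ℝ)^(m-o) * Real.Gamma ((m:ℝ)+1/2) * Real.Gamma (1/2)
      ≤ (m:ℝ)^m * Real.Gamma ((o:ℝ)+1/2) * Real.Gamma ((((m-o:ℕ)):ℝ)+1/2) := by
  intro m hom
  induction m, hom using Nat.le_induction with
  | base => simp
  | succ m hom ih =>
    have ha : m + 1 - o = (m - o) + 1 := by omega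
    set a : ℕ := m - o with hadef
    have hGm : Real.Gamma (((m+1:ℕ):ℝ)+1/2) = ((m:ℝ)+1/2) * Real.Gamma ((m:ℝ)+1/2) := by
      have : ((m+1:ℕ):ℝ)+1/2 = ((m:ℝ)+1/2) + 1 := by push_cast; ring
      rw [this, Real.Gamma_add_one]
      positivity
    have hGa : Real.Gamma (((a+1:ℕ):ℝ)+1/2) = ((a:ℝ)+1/2) * Real.Gamma ((a:ℝ)+1/2) := by
      have : ((a+1:ℕ):ℝ)+1/2 = ((a:ℝ)+1/2) + 1 := by push_cast; ring
      rw [this, Real.Gamma_add_one]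
      positivity
    rw [ha, hGm, hGa]
    have hGmpos : 0 < Real.Gamma ((m:ℝ)+1/2) := Real.Gamma_pos_of_pos (by positivity)
    have hGapos : 0 < Real.Gamma ((a:ℝ)+1/2) := Real.Gamma_pos_of_pos (by positivity)
    have hGopos : 0 < Real.Gamma ((o:ℝ)+1/2) := Real.Gamma_pos_of_pos (by positivity)
    have hGhpos : 0 < Real.Gamma (1/2 : ℝ) := Real.Gamma_pos_of_pos (by norm_num)
    have hmono := phi_le a m (by omega)
    have haa := cast_pow_pos a
    have hoo := cast_pow_pos o
    -- target: o^o * (a+1)^(a+1) * ((m+1/2) Γm) * Γh ≤ (m+1)^(m+1) * Γo * ((a+1/2) Γa)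
    have step1 : ((o:ℝ)^o * ((a:ℕ):ℝ)^a * Real.Gamma ((m:ℝ)+1/2) * Real.Gamma (1/2)) *
        (((a:ℝ)+1)^(a+1) * ((m:ℝ)+1/2)) ≤
        ((m:ℝ)^m * Real.Gamma ((o:ℝ)+1/2) * Real.Gamma (((a:ℕ):ℝ)+1/2)) *
        (((a:ℝ)+1)^(a+1) * ((m:ℝ)+1/2)) := by
      apply mul_le_mul_of_nonneg_right ih
      positivity
    have step2 : (((a:ℝ)+1)^(a+1) * ((m:ℝ)^m * ((m:ℝ)+1/2))) *
        (Real.Gamma ((o:ℝ)+1/2) * Real.Gamma (((a:ℕ):ℝ)+1/2)) ≤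
        (((m:ℝ)+1)^(m+1) * ((a:ℝ)^a * ((a:ℝ)+1/2))) *
        (Real.Gamma ((o:ℝ)+1/2) * Real.Gamma (((a:ℕ):ℝ)+1/2)) := by
      apply mul_le_mul_of_nonneg_right hmono
      positivity
    apply le_of_mul_le_mul_right _ haa
    calc (o:ℝ)^o * (((a+1:ℕ)):ℝ)^(a+1) * (((m:ℝ)+1/2) * Real.Gamma ((m:ℝ)+1/2)) *
          Real.Gamma (1/2) * ((a:ℕ):ℝ)^a
        = ((o:ℝ)^o * ((a:ℕ):ℝ)^a * Real.Gamma ((m:ℝ)+1/2) * Real.Gamma (1/2)) *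
          (((a:ℝ)+1)^(a+1) * ((m:ℝ)+1/2)) := by push_cast; ring
      _ ≤ ((m:ℝ)^m * Real.Gamma ((o:ℝ)+1/2) * Real.Gamma (((a:ℕ):ℝ)+1/2)) *
          (((a:ℝ)+1)^(a+1) * ((m:ℝ)+1/2)) := step1
      _ = (((a:ℝ)+1)^(a+1) * ((m:ℝ)^m * ((m:ℝ)+1/2))) *
          (Real.Gamma ((o:ℝ)+1/2) * Real.Gamma (((a:ℕ):ℝ)+1/2)) := by ring
      _ ≤ (((m:ℝ)+1)^(m+1) * ((a:ℝ)^a * ((a:ℝ)+1/2))) *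
          (Real.Gamma ((o:ℝ)+1/2) * Real.Gamma (((a:ℕ):ℝ)+1/2)) := step2
      _ = (((m+1:ℕ)):ℝ)^(m+1) * Real.Gamma ((o:ℝ)+1/2) *
          (((a:ℝ)+1/2) * Real.Gamma (((a:ℕ):ℝ)+1/2)) * ((a:ℕ):ℝ)^a := by push_cast; ring


/-- For nonnegative integers `o ≤ m` with `m ≥ 1`,
`(o/m)^o (1-o/m)^(m-o) / (Γ(o+1/2) Γ(m-o+1/2)) ≤ 1 / (Γ(m+1/2) Γ(1/2))`,
with the convention `0^0 = 1` (automatic for natural-number exponents). -/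
theorem bernoulli_likelihood_ratio_le (m o : ℕ) (hm : 1 ≤ m) (ho : o ≤ m) :
    ((o / m : ℝ)) ^ o * (1 - (o / m : ℝ)) ^ (m - o) /
        (Real.Gamma ((o : ℝ) + 1/2) * Real.Gamma ((m : ℝ) - o + 1/2)) ≤
      1 / (Real.Gamma ((m : ℝ) + 1/2) * Real.Gamma (1/2)) := by
  have hm0 : (0:ℝ) < m := by exact_mod_cast hm
  have hcast : ((m:ℝ)) - o = (((m-o:ℕ)):ℝ) := by
    rw [Nat.cast_sub ho]
  rw [hcast]
  have hGo : 0 < Real.Gamma ((o:ℝ)+1/2) := Real.Gamma_pos_of_pos (by positivity)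
  have hGa : 0 < Real.Gamma ((((m-o:ℕ)):ℝ)+1/2) := Real.Gamma_pos_of_pos (by positivity)
  have hGm : 0 < Real.Gamma ((m:ℝ)+1/2) := Real.Gamma_pos_of_pos (by positivity)
  have hGh : 0 < Real.Gamma (1/2 : ℝ) := Real.Gamma_pos_of_pos (by norm_num)
  rw [div_le_div_iff₀ (by positivity) (by positivity), one_mul]
  have hX : ((o / m : ℝ)) ^ o * (1 - (o / m : ℝ)) ^ (m - o)
      = ((o:ℝ)^o * (((m-o:ℕ)):ℝ)^(m-o)) / (m:ℝ)^m := by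
    have h1 : (1 - (o/m : ℝ)) = (((m-o:ℕ)):ℝ) / m := by
      rw [Nat.cast_sub ho]
      field_simp
    rw [h1, div_pow, div_pow, div_mul_div_comm, ← pow_add,
      Nat.add_sub_cancel' ho]
  rw [hX, div_mul_eq_mul_div, div_le_iff₀ (by positivity : (0:ℝ) < (m:ℝ)^m)]
  calc (o:ℝ)^o * (((m-o:ℕ)):ℝ)^(m-o) * (Real.Gamma ((m:ℝ)+1/2) * Real.Gamma (1/2))
      = (o:ℝ)^o * (((m-o:ℕ)):ℝ)^(m-o) * Real.Gamma ((m:ℝ)+1/2) * Real.Gamma (1/2) := by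
        ring
    _ ≤ (m:ℝ)^m * Real.Gamma ((o:ℝ)+1/2) * Real.Gamma ((((m-o:ℕ)):ℝ)+1/2) :=
        key_ineq o m ho
    _ = Real.Gamma ((o:ℝ)+1/2) * Real.Gamma ((((m-o:ℕ)):ℝ)+1/2) * (m:ℝ)^m := by ring
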